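/- (Good Situation 2) In the Online Bin Stretching game Game(m,t,g) with α := (t−1) − g ≥ 0 and m ≥ 3, let (L, I) be a bin configuration for which there exist two bins A and B such that (1) the sum of the loads of all bins other than A and B is at least (m−2)·g − 2α − 1, and (2) there exists a bin C different from A and B whose load is strictly less than α. Then the Algorithm has a winning strategy from (L, I): there is a strategy for the Algorithm that, against every continuation of items for which the full multiset of items remains packable into m bins of capacity g, keeps every bin load at most t − 1. -/

import Mathlib

/-- `AddToBin St e b` increases the load of the `b`-th bin of `St` by `e`
(appending a new bin of load `e` if `b` is beyond the length of `St`). -/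
def AddToBin : List ℕ → ℕ → ℕ → List ℕ
  | [], e, _ => [e]
  | x :: s, e, 0 => (x + e) :: s
  | x :: s, e, k + 1 => x :: AddToBin s e k

/-- The load of the most loaded bin. -/
def MaxBinValue (St : List ℕ) : ℕ := St.foldr max 0

/-- `Packable m g ℓ` : the items of `ℓ` can be packed into `m` bins,
each of total size at most `g`. -/
def Packable (m g : ℕ) (ℓ : List ℕ) : Prop :=
  ∃ P : List (List ℕ), P.length = m ∧ (∀ B ∈ P, B.sum ≤ g) ∧ P.flatten.Perm ℓ

/-- `BinConfig m L I` : `(L, I)` is a bin configuration on `m` bins: `L` is the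
`m`-tuple of bin loads and the multiset of items `I` can be packed into the `m`
bins producing exactly the loads `L`. -/
def BinConfig (m : ℕ) (L I : List ℕ) : Prop :=
  L.length = m ∧ ∃ P : List (List ℕ), P.map List.sum = L ∧ P.flatten.Perm I

/-- `RunAlg σ hist St es` : the bin loads obtained from the loads `St` after the
sequence of items `es` has arrived (one at a time) and each item has been packed by
the online strategy `σ`, which chooses a bin given the items sent so far, the
current loads and the incoming item; `hist` is the list of previously sent items. -/
def RunAlg (σ : List ℕ → List ℕ → ℕ → ℕ) : List ℕ → List ℕ → List ℕ → List ℕ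
  | _, St, [] => St
  | hist, St, e :: es => RunAlg σ (e :: hist) (AddToBin St e (σ hist St e)) es

/-- `AlgWins m t g ℓ St` : the Algorithm has a winning strategy in the Online Bin
Stretching game `Game(m,t,g)` from the state with already-sent items `ℓ` and bin
loads `St`: there is an online strategy (always choosing a bin index `< m`) such
that, against every continuation `es` of positive items for which the full multiset
of items remains packable into `m` bins of capacity `g`, every bin load stays at
most `t - 1` (loads only grow, so it suffices that the final loads are at most
`t - 1` for every admissible continuation, each prefix of an admissible continuation
being itself admissible). -/
def AlgWins (m t g : ℕ) (ℓ St : List ℕ) : Prop :=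
  ∃ σ : List ℕ → List ℕ → ℕ → ℕ,
    (∀ hist L e, σ hist L e < m) ∧
    ∀ es : List ℕ, (∀ e ∈ es, 0 < e) → Packable m g (es ++ ℓ) →
      MaxBinValue (RunAlg σ ℓ St es) ≤ t - 1

/-! Pack each item by First Fit into `a` or `b` and, when it fits into neither, into `c`.
An item `e` that fits into neither bin satisfies `load a + e ≥ t` and `load b + e ≥ t`; by the
volume hypothesis the total load is then more than `m g - t + load a`, so any later item that does
not fit into `a` would exceed the total volume `m g`. Hence `c` receives at most one item, and
`load c + e < α + g = t - 1`. -/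

theorem addToBin_eq_modify (St : List ℕ) (e k : ℕ) (h : k < St.length) :
    AddToBin St e k = St.modify k (· + e) := by
  induction St generalizing k with
  | nil => simp at h
  | cons x s ih =>
    cases k with
    | zero => simp [AddToBin]
    | succ k => simp [AddToBin, ih k (by simpa using h)]

theorem length_addToBin {St : List ℕ} {e k : ℕ} (h : k < St.length) :
    (AddToBin St e k).length = St.length := by
  rw [addToBin_eq_modify _ _ _ h, List.length_modify]

theorem getD_addToBin {St : List ℕ} {e k : ℕ} (h : k < St.length) (j : ℕ) :
    (AddToBin St e k).getD j 0 = St.getD j 0 + if j = k then e else 0 := by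
  rw [addToBin_eq_modify _ _ _ h, List.getD_eq_getElem?_getD, List.getD_eq_getElem?_getD,
    List.getElem?_modify]
  by_cases hjk : j = k
  · simp [hjk, List.getElem?_eq_getElem h]
  · simp [hjk, Ne.symm hjk]

theorem sum_addToBin (St : List ℕ) (e k : ℕ) : (AddToBin St e k).sum = St.sum + e := by
  induction St generalizing k with
  | nil => simp [AddToBin]
  | cons x s ih =>
    cases k with
    | zero => simp only [AddToBin, List.sum_cons]; omega
    | succ k => simp only [AddToBin, List.sum_cons, ih]; omega

theorem getD_addToBin_le {St : List ℕ} {e k T : ℕ} (h : k < St.length)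
    (hSt : ∀ i, St.getD i 0 ≤ T) (hk : St.getD k 0 + e ≤ T) (i : ℕ) :
    (AddToBin St e k).getD i 0 ≤ T := by
  rw [getD_addToBin h]
  split_ifs with hik
  · exact hik ▸ hk
  · simpa using hSt i

theorem maxBinValue_le_iff (St : List ℕ) (T : ℕ) :
    MaxBinValue St ≤ T ↔ ∀ i, St.getD i 0 ≤ T := by
  refine ⟨fun h i => ?_, fun h => List.max_le_of_forall_le St T fun x hx => ?_⟩
  · rcases lt_or_ge i St.length with hi | hi
    · rw [List.getD_eq_getElem _ _ hi]
      exact (List.le_max_of_le (List.getElem_mem hi) le_rfl).trans h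
    · rw [List.getD_eq_default _ _ hi]
      exact Nat.zero_le T
  · obtain ⟨i, hi, rfl⟩ := List.mem_iff_getElem.1 hx
    simpa only [List.getD_eq_getElem _ _ hi] using h i

theorem getD_add_getD_le_sum {L : List ℕ} {a b : ℕ} (hab : a ≠ b) (ha : a < L.length)
    (hb : b < L.length) : L.getD a 0 + L.getD b 0 ≤ L.sum := by
  have hpair : ∑ i ∈ {⟨a, ha⟩, ⟨b, hb⟩}, L[(i : Fin L.length).1] = L.getD a 0 + L.getD b 0 := by
    rw [Finset.sum_pair (by simpa [Fin.ext_iff] using hab), List.getD_eq_getElem _ _ ha,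
      List.getD_eq_getElem _ _ hb]
  rw [← hpair, ← Fin.sum_univ_getElem]
  exact Finset.sum_le_sum_of_subset (Finset.subset_univ _)

theorem Packable.sum_le {m g : ℕ} {ℓ : List ℕ} (h : Packable m g ℓ) : ℓ.sum ≤ m * g := by
  obtain ⟨P, hlen, hbins, hperm⟩ := h
  rw [← hperm.sum_eq, List.sum_flatten, ← hlen, ← List.length_map List.sum]
  exact List.sum_le_card_nsmul _ _ (by simpa using hbins)

theorem Packable.le_of_mem {m g : ℕ} {ℓ : List ℕ} (h : Packable m g ℓ) {e : ℕ} (he : e ∈ ℓ) :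
    e ≤ g := by
  obtain ⟨P, -, hbins, hperm⟩ := h
  obtain ⟨B, hB, heB⟩ := List.mem_flatten.1 (hperm.mem_iff.2 he)
  exact (List.le_sum_of_mem heB).trans (hbins B hB)

theorem BinConfig.sum_items {m : ℕ} {L I : List ℕ} (h : BinConfig m L I) : I.sum = L.sum := by
  obtain ⟨-, P, hPL, hPI⟩ := h
  rw [← hPI.sum_eq, List.sum_flatten, hPL]

theorem invariant_runAlg {σ : List ℕ → List ℕ → ℕ → ℕ} {g cap : ℕ} (Inv : List ℕ → Prop)
    (step : ∀ hist St e, Inv St → e ≤ g → St.sum + e ≤ cap → Inv (AddToBin St e (σ hist St e)))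
    (es : List ℕ) : ∀ hist St, Inv St → (∀ e ∈ es, e ≤ g) → St.sum + es.sum ≤ cap →
      Inv (RunAlg σ hist St es) := by
  induction es with
  | nil => exact fun _ _ hInv _ _ => hInv
  | cons e es ih =>
    intro hist St hInv hes hcap
    simp only [List.forall_mem_cons, List.sum_cons] at hes hcap
    exact ih _ _ (step hist St e hInv hes.1 (by omega)) hes.2 (by rw [sum_addToBin]; omega)

namespace GoodSituationTwo

def strategy (t a b c : ℕ) (_hist St : List ℕ) (e : ℕ) : ℕ :=
  if St.getD a 0 + e ≤ t - 1 then a else if St.getD b 0 + e ≤ t - 1 then b else c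

theorem strategy_lt {m t a b c : ℕ} (ha : a < m) (hb : b < m) (hc : c < m) (hist St : List ℕ)
    (e : ℕ) : strategy t a b c hist St e < m := by
  unfold strategy
  split_ifs <;> assumption

/-- The left disjunct holds while `c` has received nothing; the right one says that no further
item can fail to fit into `a` without exceeding the total volume `m g`. -/
def Invariant (m t g a b c : ℕ) (St : List ℕ) : Prop :=
  St.length = m ∧ (∀ i, St.getD i 0 ≤ t - 1) ∧
    ((St.getD c 0 < t - 1 - g ∧ m * g + St.getD a 0 + St.getD b 0 < St.sum + 2 * t) ∨
      m * g + St.getD a 0 < St.sum + t)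

variable {m t g a b c : ℕ}

theorem invariant_of_goodSituation {L : List ℕ} (hlen : L.length = m) (hL : ∀ i, L.getD i 0 ≤ t - 1)
    (ha : a < m) (hb : b < m) (hab : a ≠ b)
    (hsum : (m - 2) * g - 2 * ((t - 1) - g) - 1 ≤ L.sum - L.getD a 0 - L.getD b 0)
    (hcload : L.getD c 0 < (t - 1) - g) : Invariant m t g a b c L := by
  have hpair := getD_add_getD_le_sum hab (hlen ▸ ha) (hlen ▸ hb)
  have hmg : m * g = (m - 2) * g + 2 * g := by rw [← add_mul, Nat.sub_add_cancel (by omega)]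
  exact ⟨hlen, hL, Or.inl ⟨hcload, by omega⟩⟩

theorem Invariant.addToBin (ha : a < m) (hb : b < m) (hc : c < m) (hab : a ≠ b) (hca : c ≠ a)
    (hcb : c ≠ b) {St : List ℕ} (hInv : Invariant m t g a b c St) (hist : List ℕ) {e : ℕ}
    (he : e ≤ g) (hcap : St.sum + e ≤ m * g) :
    Invariant m t g a b c (AddToBin St e (strategy t a b c hist St e)) := by
  obtain ⟨hlen, hbound, hphase⟩ := hInv
  have hk := hlen ▸ strategy_lt (t := t) ha hb hc hist St e
  unfold strategy at hk ⊢
  split_ifs at hk ⊢ with hfitA hfitB <;>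
  · refine ⟨by rw [length_addToBin hk, hlen], getD_addToBin_le hk hbound (by omega), ?_⟩
    simp only [getD_addToBin hk, sum_addToBin, hab, hab.symm, hca, hca.symm, hcb, hcb.symm,
      if_true, if_false]
    omega

end GoodSituationTwo

theorem good_situation_two_general (m t g : ℕ)
    (L I : List ℕ) (hconf : BinConfig m L I) (hsafe : MaxBinValue L ≤ t - 1)
    (a b : ℕ) (ha : a < m) (hb : b < m) (hab : a ≠ b)
    (hsum : (m - 2) * g - 2 * ((t - 1) - g) - 1 ≤ L.sum - L.getD a 0 - L.getD b 0)
    (c : ℕ) (hc : c < m) (hca : c ≠ a) (hcb : c ≠ b)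
    (hcload : L.getD c 0 < (t - 1) - g) :
    AlgWins m t g I L := by
  refine ⟨GoodSituationTwo.strategy t a b c, GoodSituationTwo.strategy_lt ha hb hc,
    fun es _ hpack => ?_⟩
  have hinit : GoodSituationTwo.Invariant m t g a b c L :=
    GoodSituationTwo.invariant_of_goodSituation hconf.1 ((maxBinValue_le_iff L _).1 hsafe)
      ha hb hab hsum hcload
  have hfinal := invariant_runAlg _ (fun hist St e hInv => hInv.addToBin ha hb hc hab hca hcb hist)
    es I L hinit (fun e he => hpack.le_of_mem (List.mem_append_left I he))
    (by simpa [hconf.sum_items, add_comm] using hpack.sum_le)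
  exact (maxBinValue_le_iff _ _).2 hfinal.2.1

/-- Good Situation 2: in `Game(m,t,g)` with `m ≥ 3` and `α = (t-1) - g ≥ 0`, let
`(L, I)` be a bin configuration (with all loads at most `t-1`, as for every state
reached in the game) for which there exist two bins `a ≠ b` such that (1) the sum
of the loads of all bins other than `a` and `b` is at least `(m-2)·g - 2α - 1`, and
(2) there is a bin `c ∉ {a, b}` whose load is strictly less than `α`.  Then the
Algorithm has a winning strategy from `(L, I)`: there is a strategy keeping every
bin load at most `t - 1` against every continuation that stays packable into `m`
bins of capacity `g`. -/
theorem good_situation_two (m t g : ℕ) (hm : 3 ≤ m) (ht : g + 1 ≤ t)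
    (L I : List ℕ) (hconf : BinConfig m L I) (hsafe : MaxBinValue L ≤ t - 1)
    (a b : ℕ) (ha : a < m) (hb : b < m) (hab : a ≠ b)
    (hsum : (m - 2) * g - 2 * ((t - 1) - g) - 1 ≤ L.sum - L.getD a 0 - L.getD b 0)
    (c : ℕ) (hc : c < m) (hca : c ≠ a) (hcb : c ≠ b)
    (hcload : L.getD c 0 < (t - 1) - g) :
    AlgWins m t g I L :=
  good_situation_two_general m t g L I hconf hsafe a b ha hb hab hsum c hc hca hcb hcload
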